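/- Let T be a finite set of N task types. At each iteration k, each t ∈ T has a score s_k(t) = n(t) + λ·(k − last(t)), where n(t) ≤ n_max is a fixed nonnegative failure count, last(t) is the most recent iteration at which t was selected, and λ > 0. At each iteration the M task types with the highest scores are selected (ties broken arbitrarily), and selected types have last(t) reset to the current iteration. Then every task type is selected at least once every ⌈n_max/λ + N/M⌉ iterations. -/
import Mathlib


open Finset

/-- A run of the recency-weighted round-robin top-`M` selection process over a
finite set `T` of task types, starting at iteration `k₀`.
`sel k` is the set selected at iteration `k` (for `k > k₀`), `last k t` is the
most recent iteration `≤ k` at which `t` was selected, `n t` is the fixed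
failure count, and the score at iteration `k+1` is
`n t + λ·((k+1) − last k t)`. -/
structure RoundRobin (T : Type*) [Fintype T] [DecidableEq T]
    (n : T → ℕ) (lam : ℝ) (M : ℕ) (k₀ : ℕ)
    (sel : ℕ → Finset T) (last : ℕ → T → ℕ) : Prop where
  last_le_init : ∀ t, last k₀ t ≤ k₀
  card_sel : ∀ k, k₀ ≤ k → (sel (k + 1)).card = M
  top_M : ∀ k, k₀ ≤ k → ∀ t ∈ sel (k + 1), ∀ t' ∉ sel (k + 1),
    (n t' : ℝ) + lam * ((k + 1 : ℕ) - (last k t' : ℕ)) ≤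
      (n t : ℝ) + lam * ((k + 1 : ℕ) - (last k t : ℕ))
  last_update : ∀ k, k₀ ≤ k → ∀ t,
    last (k + 1) t = if t ∈ sel (k + 1) then k + 1 else last k t

theorem roundRobin_bounded_coverage_gap
    {T : Type*} [Fintype T] [DecidableEq T]
    (N M : ℕ) (hN : Fintype.card T = N) (hM : 0 < M) (hMN : M ≤ N)
    (n : T → ℕ) (nmax : ℕ) (hnmax : ∀ t, n t ≤ nmax)
    (lam : ℝ) (hlam : 0 < lam)
    (k₀ : ℕ) (sel : ℕ → Finset T) (last : ℕ → T → ℕ)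
    (hrr : RoundRobin T n lam M k₀ sel last) :
    ∀ t : T, ∀ k : ℕ, k₀ ≤ k →
      ∃ i : ℕ, k < i ∧ i ≤ k + ⌈(nmax : ℝ) / lam + (N : ℝ) / M⌉₊ ∧ t ∈ sel i := by
  obtain ⟨hinit, hcard, htop, hupd⟩ := hrr
  set G := ⌈(nmax : ℝ) / lam + (N : ℝ) / M⌉₊ with hGdef
  set D := ⌊(nmax : ℝ) / lam⌋₊ with hDdef
  have hq0 : (0 : ℝ) ≤ (nmax : ℝ) / lam := div_nonneg (Nat.cast_nonneg _) hlam.le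
  have hDle : (D : ℝ) ≤ (nmax : ℝ) / lam := Nat.floor_le hq0
  have hGge : (nmax : ℝ) / lam + (N : ℝ) / M ≤ (G : ℝ) := Nat.le_ceil _
  have hNM : (1 : ℝ) ≤ (N : ℝ) / M := by
    rw [le_div_iff₀ (by exact_mod_cast hM)]
    simpa using (Nat.cast_le (α := ℝ)).mpr hMN
  have hDG : D < G := by
    have : (D : ℝ) + 1 ≤ (G : ℝ) := by linarith
    exact_mod_cast (by exact_mod_cast this : (D : ℝ) < (G : ℝ))
  -- last m t' ≤ m for m ≥ k₀
  have hA : ∀ m, k₀ ≤ m → ∀ t', last m t' ≤ m := by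
    intro m hm
    induction m, hm using Nat.le_induction with
    | base => exact hinit
    | succ m hm ih =>
      intro t'
      rw [hupd m hm t']
      split
      · exact le_refl _
      · exact (ih t').trans (Nat.le_succ m)
  -- monotonicity of last
  have hB : ∀ t', ∀ a b, k₀ ≤ a → a ≤ b → last a t' ≤ last b t' := by
    intro t' a b ha hab
    induction b, hab using Nat.le_induction with
    | base => exact le_refl _
    | succ b hb ih =>
      rw [hupd b (ha.trans hb) t']
      split
      · exact ih.trans ((hA b (ha.trans hb) t').trans (Nat.le_succ b))
      · exact ih
  intro t k hk
  by_contra hcon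
  push_neg at hcon
  -- hcon : ∀ i, k < i → i ≤ k + G → t ∉ sel i
  -- t's last stays fixed
  have hC : ∀ g, g ≤ G → last (k + g) t = last k t := by
    intro g
    induction g with
    | zero => intro _; rfl
    | succ g ih =>
      intro hg
      have hg' : g ≤ G := (Nat.le_succ g).trans hg
      rw [show k + (g + 1) = (k + g) + 1 from rfl, hupd (k + g) (hk.trans (Nat.le_add_right k g)) t]
      rw [if_neg (hcon ((k + g) + 1) (by omega) (by omega))]
      exact ih hg'
  -- score bound: anything selected at m+1 ∈ (k, k+G] has last m ≤ k + nmax/lam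
  have hE : ∀ m, k ≤ m → m + 1 ≤ k + G → ∀ t' ∈ sel (m + 1),
      (last m t' : ℝ) ≤ (k : ℝ) + (nmax : ℝ) / lam := by
    intro m hm hmG t' ht'
    have htnot : t ∉ sel (m + 1) := hcon (m + 1) (by omega) hmG
    have hscore := htop m (hk.trans hm) t' ht' t htnot
    have hlt : last m t = last k t := by
      have := hC (m - k) (by omega)
      rwa [show k + (m - k) = m by omega] at this
    have hltk : last m t ≤ k := hlt ▸ (hA k hk t)
    have hltk' : (last m t : ℝ) ≤ (k : ℝ) := by exact_mod_cast hltk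
    have hmk : (k : ℝ) ≤ (m : ℝ) := by exact_mod_cast hm
    have hn0 : (0 : ℝ) ≤ (n t : ℝ) := Nat.cast_nonneg _
    have hnle : (n t' : ℝ) ≤ (nmax : ℝ) := by exact_mod_cast hnmax t'
    have hcast : ((m + 1 : ℕ) : ℝ) = (m : ℝ) + 1 := by push_cast; ring
    rw [hcast] at hscore
    -- lam * (last m t' - k) ≤ nmax
    have key : lam * ((last m t' : ℝ) - (k : ℝ)) ≤ (nmax : ℝ) := by nlinarith
    have : (last m t' : ℝ) - (k : ℝ) ≤ (nmax : ℝ) / lam := by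
      rw [le_div_iff₀ hlam]; linarith
    linarith
  -- the selections in iterations (k+D, k+G] are pairwise disjoint
  set S : Finset ℕ := Finset.Ioc (k + D) (k + G) with hSdef
  have hdisj : ∀ a ∈ S, ∀ b ∈ S, a ≠ b → Disjoint (sel a) (sel b) := by
    have main : ∀ a ∈ S, ∀ b ∈ S, a < b → Disjoint (sel a) (sel b) := by
      intro a ha b hb hab
      rw [Finset.disjoint_left]
      intro t' hta htb
      simp only [hSdef, Finset.mem_Ioc] at ha hb
      -- last (b-1) t' ≥ a
      obtain ⟨a', rfl⟩ : ∃ a', a = a' + 1 := ⟨a - 1, by omega⟩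
      have hlasta : last (a' + 1) t' = a' + 1 := by
        rw [hupd a' (by omega) t', if_pos hta]
      obtain ⟨b', rfl⟩ : ∃ b', b = b' + 1 := ⟨b - 1, by omega⟩
      have hmono : last (a' + 1) t' ≤ last b' t' := hB t' (a' + 1) b' (by omega) (by omega)
      have hub := hE b' (by omega) (by omega) t' htb
      have hlow : ((a' + 1 : ℕ) : ℝ) ≤ (last b' t' : ℝ) := by
        exact_mod_cast hlasta ▸ hmono
      have hfl : (nmax : ℝ) / lam < (D : ℝ) + 1 := Nat.lt_floor_add_one _
      have : ((a' + 1 : ℕ) : ℝ) ≤ (k : ℝ) + (nmax : ℝ) / lam := le_trans hlow hub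
      have hka : (k : ℝ) + (D : ℝ) + 1 ≤ ((a' + 1 : ℕ) : ℝ) := by
        have : k + D + 1 ≤ a' + 1 := by omega
        exact_mod_cast this
      linarith
    intro a ha b hb hab
    rcases lt_or_gt_of_ne hab with h | h
    · exact main a ha b hb h
    · exact (main b hb a ha h).symm
  -- count
  have hcardU : (S.biUnion sel).card = M * (G - D) := by
    rw [Finset.card_biUnion hdisj]
    have : ∀ j ∈ S, (sel j).card = M := by
      intro j hj
      simp only [hSdef, Finset.mem_Ioc] at hj
      obtain ⟨j', rfl⟩ : ∃ j'', j = j'' + 1 := ⟨j - 1, by omega⟩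
      exact hcard j' (by omega)
    rw [Finset.sum_congr rfl this, Finset.sum_const, smul_eq_mul, hSdef, Nat.card_Ioc,
      show k + G - (k + D) = G - D by omega, Nat.mul_comm]
  have hsub : S.biUnion sel ⊆ Finset.univ.erase t := by
    intro x hx
    rw [Finset.mem_biUnion] at hx
    obtain ⟨j, hj, hxj⟩ := hx
    simp only [hSdef, Finset.mem_Ioc] at hj
    refine Finset.mem_erase.mpr ⟨?_, Finset.mem_univ x⟩
    rintro rfl
    exact hcon j (by omega) hj.2 hxj
  have hle : M * (G - D) ≤ N - 1 := by
    have := Finset.card_le_card hsub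
    rwa [hcardU, Finset.card_erase_of_mem (Finset.mem_univ t), Finset.card_univ, hN] at this
  -- contradiction: M * (G - D) ≥ N
  have hGD : ((G - D : ℕ) : ℝ) = (G : ℝ) - (D : ℝ) := by
    push_cast [Nat.cast_sub hDG.le]; ring
  have hNge : (N : ℝ) ≤ (M : ℝ) * ((G - D : ℕ) : ℝ) := by
    rw [hGD]
    have h1 : (N : ℝ) / M ≤ (G : ℝ) - (D : ℝ) := by linarith
    have hM0 : (0 : ℝ) < (M : ℝ) := by exact_mod_cast hM
    calc (N : ℝ) = (M : ℝ) * ((N : ℝ) / M) := by field_simp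
      _ ≤ (M : ℝ) * ((G : ℝ) - (D : ℝ)) := by
          exact mul_le_mul_of_nonneg_left h1 hM0.le
  have hle' : ((M * (G - D) : ℕ) : ℝ) ≤ ((N - 1 : ℕ) : ℝ) := by exact_mod_cast hle
  have hN1 : ((N - 1 : ℕ) : ℝ) = (N : ℝ) - 1 := by
    have : 1 ≤ N := hM.trans_le hMN
    push_cast [Nat.cast_sub this]; ring
  rw [hN1, Nat.cast_mul] at hle'
  linarith
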